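/- arXiv:2308.01272 — 3 statements merged into one kernel-verified Lean document; each statement's English description precedes it below -/
import Mathlib

section
/- Let μ ≥ 0, m ≥ 0, φ_m(t) = t^{m+1}/(m+1), and ρ(t) = t^{(μ+1)/2} K_{(μ−1)/(2(m+1))}(φ_m(t)). Then ρ'(t)/(t^m ρ(t)) → −1 as t → ∞. -/
noncomputable def besselK (η y : ℝ) : ℝ :=
  ∫ ζ in Set.Ioi (0:ℝ), Real.exp (-y * Real.cosh ζ) * Real.cosh (η * ζ)

noncomputable def phim (m t : ℝ) : ℝ := t ^ (m + 1) / (m + 1)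

noncomputable def rho (μ m t : ℝ) : ℝ :=
  t ^ ((μ + 1) / 2) * besselK ((μ - 1) / (2 * (m + 1))) (phim m t)

/-!
Differentiating under the integral sign gives `∂_y K_η(y) = -L_η(y)` with
`L_η(y) = ∫₀^∞ cosh ζ · e^{-y cosh ζ} cosh(ηζ) dζ`, so by the chain rule
`ρ'(t) / (t^m ρ(t)) = ((μ + 1)/2) t^{-(m+1)} - L_ν(φ_m(t)) / K_ν(φ_m(t))`.
As `y → ∞` the weight `e^{-y cosh ζ}` concentrates at `ζ = 0`, so the weighted mean
`L_η / K_η` of `cosh ζ` tends to `cosh 0 = 1`: on `(0, d]` we have `cosh ζ ≤ cosh d`, while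
the part over `(d, ∞)` is `O(e^{-y cosh d})`, negligible against
`K_η(y) ≥ (d/2) e^{-y cosh (d/2)}`.
-/

open Real MeasureTheory Set Filter Topology Asymptotics

lemma cosh_le_exp_abs (x : ℝ) : cosh x ≤ exp |x| := by
  rw [← cosh_abs, cosh_eq]
  linarith [exp_le_exp.mpr (neg_le_self (abs_nonneg x))]

lemma exp_div_two_le_cosh (x : ℝ) : exp x / 2 ≤ cosh x := by
  rw [cosh_eq]
  linarith [exp_pos (-x)]

lemma eventually_mul_le_mul_cosh (c : ℝ) {y : ℝ} (hy : 0 < y) :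
    ∀ᶠ ζ in atTop, c * ζ ≤ y * cosh ζ := by
  have hlo : (fun ζ : ℝ => ζ) =o[atTop] exp := by
    simpa using isLittleO_pow_exp_atTop (n := 1)
  filter_upwards [hlo.bound (c := y / (2 * (|c| + 1))) (by positivity), eventually_ge_atTop 0]
    with ζ hζ hζ0
  rw [norm_of_nonneg hζ0, norm_of_nonneg (exp_pos ζ).le] at hζ
  calc c * ζ ≤ (|c| + 1) * ζ := by gcongr; linarith [le_abs_self c]
    _ ≤ (|c| + 1) * (y / (2 * (|c| + 1)) * exp ζ) := by gcongr
    _ = y * (exp ζ / 2) := by field_simp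
    _ ≤ y * cosh ζ := by gcongr; exact exp_div_two_le_cosh ζ

lemma integrableOn_cosh_pow_mul_besselK_integrand (η : ℝ) (n : ℕ) {y : ℝ} (hy : 0 < y) :
    IntegrableOn (fun ζ => cosh ζ ^ n * (exp (-y * cosh ζ) * cosh (η * ζ))) (Ioi 0) := by
  refine integrable_of_isBigO_exp_neg one_pos (Continuous.continuousOn (by fun_prop))
    (IsBigO.of_bound 1 ?_)
  filter_upwards [eventually_ge_atTop 0, eventually_mul_le_mul_cosh (n + |η| + 1) hy]
    with ζ hζ hcosh
  have hexp : cosh ζ ≤ exp ζ := by simpa [abs_of_nonneg hζ] using cosh_le_exp_abs ζ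
  have hη : cosh (η * ζ) ≤ exp (|η| * ζ) := by
    simpa [abs_mul, abs_of_nonneg hζ] using cosh_le_exp_abs (η * ζ)
  have := cosh_pos (η * ζ)
  rw [norm_of_nonneg (by positivity), norm_of_nonneg (exp_pos _).le, one_mul]
  calc cosh ζ ^ n * (exp (-y * cosh ζ) * cosh (η * ζ))
      ≤ exp ζ ^ n * (exp (-y * cosh ζ) * exp (|η| * ζ)) := by gcongr
    _ = exp (n * ζ + -y * cosh ζ + |η| * ζ) := by rw [← exp_nat_mul, exp_add, exp_add]; ring
    _ ≤ exp (-1 * ζ) := exp_le_exp.mpr (by linarith)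

lemma integrableOn_besselK_integrand (η : ℝ) {y : ℝ} (hy : 0 < y) :
    IntegrableOn (fun ζ => exp (-y * cosh ζ) * cosh (η * ζ)) (Ioi 0) := by
  simpa using integrableOn_cosh_pow_mul_besselK_integrand η 0 hy

lemma integrableOn_cosh_mul_besselK_integrand (η : ℝ) {y : ℝ} (hy : 0 < y) :
    IntegrableOn (fun ζ => cosh ζ * (exp (-y * cosh ζ) * cosh (η * ζ))) (Ioi 0) := by
  simpa using integrableOn_cosh_pow_mul_besselK_integrand η 1 hy

lemma besselK_pos (η : ℝ) {y : ℝ} (hy : 0 < y) : 0 < besselK η y := by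
  refine (setIntegral_pos_iff_support_of_nonneg_ae (ae_of_all _ fun ζ => by positivity)
    (integrableOn_besselK_integrand η hy)).mpr ?_
  have : Function.support (fun ζ => exp (-y * cosh ζ) * cosh (η * ζ)) = univ :=
    eq_univ_of_forall fun ζ => (by positivity : (0 : ℝ) < _).ne'
  rw [this, univ_inter]
  simp

noncomputable def besselL (η y : ℝ) : ℝ :=
  ∫ ζ in Ioi 0, cosh ζ * (exp (-y * cosh ζ) * cosh (η * ζ))

lemma besselK_le_besselL (η : ℝ) {y : ℝ} (hy : 0 < y) : besselK η y ≤ besselL η y :=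
  integral_mono (integrableOn_besselK_integrand η hy)
    (integrableOn_cosh_mul_besselK_integrand η hy)
    fun ζ => le_mul_of_one_le_left (by positivity) (one_le_cosh ζ)

lemma hasDerivAt_besselK (η : ℝ) {y : ℝ} (hy : 0 < y) :
    HasDerivAt (besselK η) (-besselL η y) y := by
  have hy2 : 0 < y / 2 := by linarith
  have key := hasDerivAt_integral_of_dominated_loc_of_deriv_le (μ := volume.restrict (Ioi 0))
    (F := fun x ζ => exp (-x * cosh ζ) * cosh (η * ζ))
    (F' := fun x ζ => -(cosh ζ * (exp (-x * cosh ζ) * cosh (η * ζ))))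
    (bound := fun ζ => cosh ζ * (exp (-(y / 2) * cosh ζ) * cosh (η * ζ)))
    (Metric.ball_mem_nhds y hy2)
    (Eventually.of_forall fun x => (Continuous.aestronglyMeasurable (by fun_prop)))
    (integrableOn_besselK_integrand η hy) (Continuous.aestronglyMeasurable (by fun_prop))
    ?_ (integrableOn_cosh_mul_besselK_integrand η hy2) ?_
  · rw [besselL, ← integral_neg]
    exact key.2
  · refine ae_of_all _ fun ζ x hx => ?_
    have hx2 : y / 2 ≤ x := by
      rw [Metric.mem_ball, Real.dist_eq] at hx
      linarith [(abs_lt.mp hx).1]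
    have := cosh_pos (η * ζ)
    rw [norm_neg, norm_of_nonneg (by positivity)]
    gcongr
  · refine ae_of_all _ fun ζ x _ => ?_
    have h : HasDerivAt (fun x => -x * cosh ζ) (-cosh ζ) x := by
      simpa using (hasDerivAt_neg x).mul_const (cosh ζ)
    exact (h.exp.mul_const _).congr_deriv (by ring)

lemma besselL_le_cosh_mul_besselK_add (η : ℝ) {y d : ℝ} (hy : 0 < y) (hd : 0 ≤ d) :
    besselL η y ≤
      cosh d * besselK η y + ∫ ζ in Ioi d, cosh ζ * (exp (-y * cosh ζ) * cosh (η * ζ)) := by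
  have hK := integrableOn_besselK_integrand η hy
  have hL := integrableOn_cosh_mul_besselK_integrand η hy
  have hsplit : besselL η y =
      (∫ ζ in Ioc 0 d, cosh ζ * (exp (-y * cosh ζ) * cosh (η * ζ))) +
      ∫ ζ in Ioi d, cosh ζ * (exp (-y * cosh ζ) * cosh (η * ζ)) := by
    rw [besselL, ← Ioc_union_Ioi_eq_Ioi hd]
    exact setIntegral_union Ioc_disjoint_Ioi_same measurableSet_Ioi
      (hL.mono_set Ioc_subset_Ioi_self) (hL.mono_set (Ioi_subset_Ioi hd))
  have hnear : ∫ ζ in Ioc 0 d, cosh ζ * (exp (-y * cosh ζ) * cosh (η * ζ)) ≤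
      cosh d * besselK η y := by
    calc ∫ ζ in Ioc 0 d, cosh ζ * (exp (-y * cosh ζ) * cosh (η * ζ))
        ≤ ∫ ζ in Ioc 0 d, cosh d * (exp (-y * cosh ζ) * cosh (η * ζ)) := by
          refine setIntegral_mono_on (hL.mono_set Ioc_subset_Ioi_self)
            ((hK.mono_set Ioc_subset_Ioi_self).const_mul _) measurableSet_Ioc fun ζ hζ => ?_
          have hcosh : cosh ζ ≤ cosh d := by
            rw [cosh_le_cosh, abs_of_pos hζ.1, abs_of_nonneg hd]
            exact hζ.2
          gcongr
      _ ≤ cosh d * besselK η y := by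
          rw [integral_const_mul]
          exact mul_le_mul_of_nonneg_left (setIntegral_mono_set hK
            (ae_of_all _ fun ζ => by positivity) Ioc_subset_Ioi_self.eventuallyLE) (cosh_pos d).le
  linarith

lemma setIntegral_Ioi_cosh_mul_besselK_integrand_le (η : ℝ) {y d : ℝ} (hy : 1 ≤ y)
    (hd : 0 ≤ d) :
    ∫ ζ in Ioi d, cosh ζ * (exp (-y * cosh ζ) * cosh (η * ζ)) ≤
      exp (-(y - 1) * cosh d) * besselL η 1 := by
  have hL := integrableOn_cosh_mul_besselK_integrand η one_pos
  calc ∫ ζ in Ioi d, cosh ζ * (exp (-y * cosh ζ) * cosh (η * ζ))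
      ≤ ∫ ζ in Ioi d, exp (-(y - 1) * cosh d) *
          (cosh ζ * (exp (-1 * cosh ζ) * cosh (η * ζ))) := by
        refine setIntegral_mono_on
          ((integrableOn_cosh_mul_besselK_integrand η (by linarith)).mono_set (Ioi_subset_Ioi hd))
          ((hL.mono_set (Ioi_subset_Ioi hd)).const_mul _) measurableSet_Ioi fun ζ hζ => ?_
        have hcosh : cosh d ≤ cosh ζ := by
          rw [cosh_le_cosh, abs_of_nonneg hd, abs_of_nonneg (hd.trans hζ.le)]
          exact hζ.le
        have hexp : exp (-y * cosh ζ) ≤ exp (-(y - 1) * cosh d) * exp (-1 * cosh ζ) := by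
          rw [← exp_add, exp_le_exp]
          nlinarith
        have := cosh_pos (η * ζ)
        have := cosh_pos ζ
        calc cosh ζ * (exp (-y * cosh ζ) * cosh (η * ζ))
            ≤ cosh ζ * (exp (-(y - 1) * cosh d) * exp (-1 * cosh ζ) * cosh (η * ζ)) := by
              gcongr
          _ = _ := by ring
    _ ≤ exp (-(y - 1) * cosh d) * besselL η 1 := by
        rw [integral_const_mul]
        exact mul_le_mul_of_nonneg_left (setIntegral_mono_set hL
          (ae_of_all _ fun ζ => by positivity) (Ioi_subset_Ioi hd).eventuallyLE) (exp_pos _).le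

lemma mul_exp_neg_mul_cosh_le_besselK (η : ℝ) {y r : ℝ} (hy : 0 < y) (hr : 0 ≤ r) :
    r * exp (-y * cosh r) ≤ besselK η y := by
  have hK := integrableOn_besselK_integrand η hy
  calc r * exp (-y * cosh r) = exp (-y * cosh r) * volume.real (Ioc 0 r) := by simp [hr, mul_comm]
    _ ≤ ∫ ζ in Ioc 0 r, exp (-y * cosh ζ) * cosh (η * ζ) := by
        refine setIntegral_ge_of_const_le_real measurableSet_Ioc measure_Ioc_lt_top.ne
          (fun ζ hζ => ?_) (hK.mono_set Ioc_subset_Ioi_self)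
        have hcosh : cosh ζ ≤ cosh r := by
          rw [cosh_le_cosh, abs_of_pos hζ.1, abs_of_nonneg hr]
          exact hζ.2
        calc exp (-y * cosh r) ≤ exp (-y * cosh ζ) := exp_le_exp.mpr (by nlinarith)
          _ ≤ exp (-y * cosh ζ) * cosh (η * ζ) :=
            le_mul_of_one_le_right (exp_pos _).le (one_le_cosh _)
    _ ≤ besselK η y := setIntegral_mono_set hK (ae_of_all _ fun ζ => by positivity)
        Ioc_subset_Ioi_self.eventuallyLE

lemma tendsto_setIntegral_Ioi_div_besselK (η : ℝ) {d : ℝ} (hd : 0 < d) :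
    Tendsto
      (fun y => (∫ ζ in Ioi d, cosh ζ * (exp (-y * cosh ζ) * cosh (η * ζ))) / besselK η y)
      atTop (𝓝 0) := by
  set c := cosh d - cosh (d / 2)
  have hc : 0 < c := sub_pos.mpr (cosh_lt_cosh.mpr (by
    rw [abs_of_pos hd, abs_of_pos (half_pos hd)]
    exact half_lt_self hd))
  have hdecay : Tendsto (fun y => 2 * exp (cosh d) * besselL η 1 / d * exp (-(c * y)))
      atTop (𝓝 0) := by
    simpa using (tendsto_exp_neg_atTop_nhds_zero.comp (tendsto_id.const_mul_atTop hc)).const_mul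
      (2 * exp (cosh d) * besselL η 1 / d)
  refine squeeze_zero' ?_ ?_ hdecay
  · filter_upwards [eventually_gt_atTop 0] with y hy
    exact div_nonneg (setIntegral_nonneg measurableSet_Ioi fun ζ _ => by positivity)
      (besselK_pos η hy).le
  · filter_upwards [eventually_ge_atTop 1] with y hy
    have hsplit : exp (-(y - 1) * cosh d) =
        exp (cosh d) * exp (-(c * y)) * exp (-y * cosh (d / 2)) := by
      rw [← exp_add, ← exp_add]
      congr 1
      ring
    calc (∫ ζ in Ioi d, cosh ζ * (exp (-y * cosh ζ) * cosh (η * ζ))) / besselK η y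
        ≤ exp (-(y - 1) * cosh d) * besselL η 1 / (d / 2 * exp (-y * cosh (d / 2))) :=
          div_le_div₀ (mul_nonneg (exp_pos _).le
              ((besselK_pos η one_pos).trans_le (besselK_le_besselL η one_pos)).le)
            (setIntegral_Ioi_cosh_mul_besselK_integrand_le η hy hd.le) (by positivity)
            (mul_exp_neg_mul_cosh_le_besselK η (by linarith) (by positivity))
      _ = 2 * exp (cosh d) * besselL η 1 / d * exp (-(c * y)) := by
          rw [hsplit]
          field_simp

theorem tendsto_besselL_div_besselK (η : ℝ) :
    Tendsto (fun y => besselL η y / besselK η y) atTop (𝓝 1) := by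
  refine tendsto_order.mpr ⟨fun a ha => ?_, fun b hb => ?_⟩
  · filter_upwards [eventually_gt_atTop 0] with y hy
    exact ha.trans_le ((one_le_div (besselK_pos η hy)).mpr (besselK_le_besselL η hy))
  · have hnear : ∀ᶠ d in 𝓝[>] 0, cosh d < (1 + b) / 2 :=
      nhdsWithin_le_nhds <| continuous_cosh.continuousAt.eventually_lt continuousAt_const
        (by rw [cosh_zero]; linarith)
    obtain ⟨d, hcosh, hd⟩ := (hnear.and self_mem_nhdsWithin).exists
    filter_upwards [eventually_gt_atTop 0, (tendsto_setIntegral_Ioi_div_besselK η hd).eventually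
      (gt_mem_nhds (show (0 : ℝ) < (b - 1) / 2 by linarith))] with y hy htail
    have hK := besselK_pos η hy
    calc besselL η y / besselK η y
        ≤ (cosh d * besselK η y +
            ∫ ζ in Ioi d, cosh ζ * (exp (-y * cosh ζ) * cosh (η * ζ))) / besselK η y :=
          div_le_div_of_nonneg_right (besselL_le_cosh_mul_besselK_add η hy hd.le) hK.le
      _ = cosh d +
            (∫ ζ in Ioi d, cosh ζ * (exp (-y * cosh ζ) * cosh (η * ζ))) / besselK η y := by
          rw [add_div, mul_div_cancel_right₀ _ hK.ne']
      _ < b := by linarith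

lemma hasDerivAt_phim {m t : ℝ} (hm : m + 1 ≠ 0) (ht : 0 < t) :
    HasDerivAt (phim m) (t ^ m) t := by
  have h := (hasDerivAt_rpow_const (p := m + 1) (Or.inl ht.ne')).div_const (m + 1)
  rwa [add_sub_cancel_right, mul_div_cancel_left₀ _ hm] at h

lemma deriv_rho_div_eq {μ m t : ℝ} (hm : 0 < m + 1) (ht : 0 < t) :
    deriv (rho μ m) t / (t ^ m * rho μ m t) =
      (μ + 1) / 2 / t ^ (m + 1) -
        besselL ((μ - 1) / (2 * (m + 1))) (phim m t) /
          besselK ((μ - 1) / (2 * (m + 1))) (phim m t) := by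
  set ν := (μ - 1) / (2 * (m + 1))
  set a := (μ + 1) / 2
  have hφ : 0 < phim m t := div_pos (rpow_pos_of_pos ht _) hm
  have hρ : HasDerivAt (rho μ m)
      (a * t ^ (a - 1) * besselK ν (phim m t) +
        t ^ a * (-besselL ν (phim m t) * t ^ m)) t :=
    (hasDerivAt_rpow_const (Or.inl ht.ne')).mul
      ((hasDerivAt_besselK ν hφ).comp t (hasDerivAt_phim hm.ne' ht))
  have hK := (besselK_pos ν hφ).ne'
  have htm := (rpow_pos_of_pos ht m).ne'
  have hta := (rpow_pos_of_pos ht a).ne'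
  have hrho : rho μ m t = t ^ a * besselK ν (phim m t) := rfl
  rw [hρ.deriv, hrho, rpow_sub ht, rpow_add ht, rpow_one]
  field_simp
  ring

theorem stmt7_general (μ m : ℝ) (hm : 0 ≤ m) :
    Filter.Tendsto (fun t : ℝ => deriv (rho μ m) t / (t ^ m * rho μ m t))
      Filter.atTop (nhds (-1)) := by
  have hm1 : 0 < m + 1 := by linarith
  have hpow : Tendsto (fun t : ℝ => t ^ (m + 1)) atTop atTop := tendsto_rpow_atTop hm1
  have hlim := (tendsto_const_nhds (x := (μ + 1) / 2)).div_atTop hpow |>.sub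
    ((tendsto_besselL_div_besselK ((μ - 1) / (2 * (m + 1)))).comp (hpow.atTop_div_const hm1))
  rw [zero_sub] at hlim
  refine hlim.congr' ?_
  filter_upwards [eventually_gt_atTop 0] with t ht
  exact (deriv_rho_div_eq hm1 ht).symm

theorem stmt7 (μ m : ℝ) (hμ : 0 ≤ μ) (hm : 0 ≤ m) :
    Filter.Tendsto (fun t : ℝ => deriv (rho μ m) t / (t ^ m * rho μ m t))
      Filter.atTop (nhds (-1)) :=
  stmt7_general μ m hm
end

section
/- Let p > 1, T₀ ≥ 1, C > 0, and let H : [T₀, T) → (0, ∞) be differentiable and satisfy H'(t) ≥ C H(t)^p / t for all t ∈ [T₀, T). Then T ≤ T₀ · exp( H(T₀)^{−(p−1)} / (C(p−1)) ). -/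
theorem stmt12 (p C T₀ T : ℝ) (hp : 1 < p) (hT₀ : 1 ≤ T₀) (hC : 0 < C) (hTT : T₀ < T)
    (H : ℝ → ℝ)
    (hpos : ∀ t ∈ Set.Ico T₀ T, 0 < H t)
    (hdiff : ∀ t ∈ Set.Ico T₀ T, DifferentiableAt ℝ H t)
    (hineq : ∀ t ∈ Set.Ico T₀ T, C * H t ^ p / t ≤ deriv H t) :
    T ≤ T₀ * Real.exp (H T₀ ^ (-(p - 1)) / (C * (p - 1))) := by
  set B := T₀ * Real.exp (H T₀ ^ (-(p - 1)) / (C * (p - 1))) with hB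
  have hT₀mem : T₀ ∈ Set.Ico T₀ T := ⟨le_refl _, hTT⟩
  have hK : (0:ℝ) < C * (p - 1) := mul_pos hC (by linarith)
  have hHT₀ : 0 < H T₀ := hpos T₀ hT₀mem
  set φ : ℝ → ℝ := fun s => H s ^ (-(p - 1)) + (C * (p - 1)) * Real.log s with hφ
  -- derivative of φ
  have hder : ∀ s ∈ Set.Ico T₀ T, HasDerivAt φ
      ((-(p - 1)) * H s ^ (-(p - 1) - 1) * deriv H s + (C * (p - 1)) * s⁻¹) s := by
    intro s hs
    have hs0 : 0 < s := lt_of_lt_of_le one_pos (le_trans hT₀ hs.1)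
    have hH : HasDerivAt H (deriv H s) s := (hdiff s hs).hasDerivAt
    have h1 : HasDerivAt (fun x => H x ^ (-(p - 1)))
        ((-(p - 1)) * H s ^ (-(p - 1) - 1) * deriv H s) s := by
      have := hH.rpow_const (p := -(p - 1)) (Or.inl (ne_of_gt (hpos s hs)))
      convert this using 1; ring
    have h2 : HasDerivAt (fun x => (C * (p - 1)) * Real.log x) ((C * (p - 1)) * s⁻¹) s :=
      (Real.hasDerivAt_log (ne_of_gt hs0)).const_mul _
    exact h1.add h2
  have hdernonpos : ∀ s ∈ Set.Ico T₀ T,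
      (-(p - 1)) * H s ^ (-(p - 1) - 1) * deriv H s + (C * (p - 1)) * s⁻¹ ≤ 0 := by
    intro s hs
    have hs0 : 0 < s := lt_of_lt_of_le one_pos (le_trans hT₀ hs.1)
    have hHs : 0 < H s := hpos s hs
    have hHp : 0 < H s ^ p := Real.rpow_pos_of_pos hHs p
    have hne : H s ^ (-(p - 1) - 1) = (H s ^ p)⁻¹ := by
      rw [show -(p - 1) - 1 = -p by ring, Real.rpow_neg hHs.le]
    have hineqs := hineq s hs
    have hc : (-(p - 1)) * H s ^ (-(p - 1) - 1) ≤ 0 := by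
      rw [hne]
      have : 0 < (H s ^ p)⁻¹ := inv_pos.mpr hHp
      nlinarith
    have := mul_le_mul_of_nonpos_left hineqs hc
    have heq : (-(p - 1)) * H s ^ (-(p - 1) - 1) * (C * H s ^ p / s) =
        -((C * (p - 1)) * s⁻¹) := by
      rw [hne]; field_simp
    linarith [heq ▸ this]
  have key : ∀ t ∈ Set.Ico T₀ T, t ≤ B := by
    rintro t ⟨ht1, ht2⟩
    have ht0 : 0 < t := lt_of_lt_of_le one_pos (le_trans hT₀ ht1)
    have hsub : Set.Icc T₀ t ⊆ Set.Ico T₀ T := fun x hx => ⟨hx.1, lt_of_le_of_lt hx.2 ht2⟩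
    have hmono : AntitoneOn φ (Set.Icc T₀ t) := by
      apply antitoneOn_of_deriv_nonpos (convex_Icc T₀ t)
      · intro x hx
        exact ((hder x (hsub hx)).differentiableAt).continuousAt.continuousWithinAt
      · intro x hx
        rw [interior_Icc] at hx
        exact ((hder x (hsub ⟨hx.1.le, hx.2.le⟩)).differentiableAt).differentiableWithinAt
      · intro x hx
        rw [interior_Icc] at hx
        have hxm := hsub ⟨hx.1.le, hx.2.le⟩
        rw [(hder x hxm).deriv]
        exact hdernonpos x hxm
    have hφt : φ t ≤ φ T₀ :=
      hmono (Set.left_mem_Icc.mpr ht1) ⟨ht1, le_refl t⟩ ht1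
    have hHt : 0 < H t := hpos t ⟨ht1, ht2⟩
    have hHtpow : 0 < H t ^ (-(p - 1)) := Real.rpow_pos_of_pos hHt _
    -- from hφt : H t ^ ... + K log t ≤ H T₀ ^ ... + K log T₀
    have hlog : Real.log t < Real.log T₀ + H T₀ ^ (-(p - 1)) / (C * (p - 1)) := by
      simp only [hφ] at hφt
      have : (C * (p - 1)) * (Real.log t - Real.log T₀) < H T₀ ^ (-(p - 1)) := by nlinarith
      have h2 : Real.log t - Real.log T₀ < H T₀ ^ (-(p - 1)) / (C * (p - 1)) :=
        (lt_div_iff₀ hK).mpr (by nlinarith)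
      linarith
    calc t = Real.exp (Real.log t) := (Real.exp_log ht0).symm
      _ ≤ Real.exp (Real.log T₀ + H T₀ ^ (-(p - 1)) / (C * (p - 1))) :=
          Real.exp_le_exp.mpr hlog.le
      _ = B := by rw [Real.exp_add, Real.exp_log (lt_of_lt_of_le one_pos hT₀)]
  by_contra hcon
  push_neg at hcon
  set t := max T₀ ((B + T) / 2) with htdef
  have ht1 : T₀ ≤ t := le_max_left _ _
  have ht2 : t < T := max_lt hTT (by linarith)
  have hBt : B < t := lt_of_lt_of_le (by linarith : B < (B + T) / 2) (le_max_right _ _)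
  exact absurd (key t ⟨ht1, ht2⟩) (not_le.mpr hBt)
end

section
/- Let m ≥ 0, μ ≥ 0, T₀ ≥ 2 and suppose U : [T₀, ∞) → ℝ is differentiable with U(T₀) ≥ 0 and satisfies, for some constant c > 0 and Γ(t) continuous with Γ(t) ≤ 2t^m + μ/t for all t, the inequality U'(t) + Γ(t) U(t) ≥ c t^m for t ≥ T₀. If moreover Γ(t) ≥ (3/2) t^m for t ≥ T₀, then there exists a constant c' > 0 (depending on m, μ, c, T₀) such that U(t) ≥ c' for all t ≥ 2T₀. -/
/-!
Set `L = c / (4 + μ)`. Since `t ≥ 2` and `m ≥ 0`, the upper bound on `Γ` gives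
`Γ t ≤ (2 + μ / 2) t ^ m`, so wherever `U t < L` the damping term `Γ t U t` is at most
`c t ^ m / 2` and the differential inequality forces `U' t ≥ c t ^ m / 2 ≥ c / 2`. Hence `U`
cannot stay below `L` for long: on `[T₀, t]` it either climbs at rate `c / 2` from
`U T₀ ≥ 0`, which reaches `c ≥ L` after time `T₀ ≥ 2`, or it stays above `L` after the
last time it was at least `L`.
-/

open Set

theorem min_le_of_le_deriv_of_lt {f : ℝ → ℝ} {a b L κ : ℝ} (hab : a ≤ b) (hκ : 0 ≤ κ)
    (hfc : ContinuousOn f (Icc a b)) (hfd : DifferentiableOn ℝ f (Ioo a b))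
    (hderiv : ∀ x ∈ Ioo a b, f x < L → κ ≤ deriv f x) :
    min L (f a + κ * (b - a)) ≤ f b := by
  have gain : ∀ s ∈ Icc a b, (∀ x ∈ Ioo s b, f x < L) → f s + κ * (b - s) ≤ f b := by
    intro s hs hlt
    have hsub : Icc s b ⊆ Icc a b := Icc_subset_Icc_left hs.1
    have := (convex_Icc s b).mul_sub_le_image_sub_of_le_deriv (hfc.mono hsub)
      (by rw [interior_Icc]; exact hfd.mono (Ioo_subset_Ioo_left hs.1))
      (fun x hx => by
        rw [interior_Icc] at hx
        exact hderiv x ⟨hs.1.trans_lt hx.1, hx.2⟩ (hlt x hx))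
      s (left_mem_Icc.2 hs.2) b (right_mem_Icc.2 hs.2) hs.2
    linarith
  set S := {x ∈ Icc a b | L ≤ f x}
  rcases S.eq_empty_or_nonempty with hS | hS
  · refine min_le_of_right_le (gain a (left_mem_Icc.2 hab) fun x hx => ?_)
    by_contra! h
    exact hS.subset ⟨Ioo_subset_Icc_self hx, h⟩
  · -- `sSup S` is the last time in `[a, b]` at which `f` is at least `L`.
    have hbdd : BddAbove S := ⟨b, fun x hx => hx.1.2⟩
    have hsS : sSup S ∈ S :=
      (hfc.preimage_isClosed_of_isClosed isClosed_Icc isClosed_Ici).csSup_mem hS hbdd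
    refine min_le_of_left_le ?_
    have := gain (sSup S) hsS.1 fun x hx => by
      by_contra! h
      exact (le_csSup hbdd ⟨⟨hsS.1.1.trans hx.1.le, hx.2.le⟩, h⟩).not_gt hx.1
    nlinarith [hsS.2, hsS.1.2]

theorem two_mul_rpow_add_div_le {t m μ : ℝ} (ht : 2 ≤ t) (hm : 0 ≤ m) (hμ : 0 ≤ μ) :
    2 * t ^ m + μ / t ≤ (2 + μ / 2) * t ^ m := by
  have h1 : 1 ≤ t ^ m := Real.one_le_rpow (by linarith) hm
  have h2 : μ / t ≤ μ / 2 := div_le_div_of_nonneg_left hμ (by norm_num) ht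
  nlinarith

theorem div_two_le_of_lt_div_four_add {t m μ c γ u u' : ℝ} (ht : 2 ≤ t) (hm : 0 ≤ m)
    (hμ : 0 ≤ μ) (hc : 0 ≤ c) (hγ0 : 0 ≤ γ) (hγ : γ ≤ 2 * t ^ m + μ / t)
    (hineq : c * t ^ m ≤ u' + γ * u) (hu : u < c / (4 + μ)) :
    c / 2 ≤ u' := by
  have htm : 1 ≤ t ^ m := Real.one_le_rpow (by linarith) hm
  have hγK : γ ≤ (2 + μ / 2) * t ^ m := hγ.trans (two_mul_rpow_add_div_le ht hm hμ)
  have hKu : (2 + μ / 2) * u ≤ c / 2 := by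
    rw [lt_div_iff₀ (by positivity)] at hu
    linarith
  have hγu : γ * u ≤ c / 2 * t ^ m := by
    rcases le_or_gt u 0 with hu0 | hu0
    · nlinarith [mul_nonpos_of_nonneg_of_nonpos hγ0 hu0]
    · calc γ * u ≤ (2 + μ / 2) * t ^ m * u := mul_le_mul_of_nonneg_right hγK hu0.le
        _ = t ^ m * ((2 + μ / 2) * u) := by ring
        _ ≤ t ^ m * (c / 2) := mul_le_mul_of_nonneg_left hKu (by positivity)
        _ = c / 2 * t ^ m := by ring
  nlinarith

theorem stmt14_general (m μ T₀ c : ℝ) (hm : 0 ≤ m) (hμ : 0 ≤ μ) (hT₀ : 2 ≤ T₀) (hc : 0 < c)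
    (U Γ : ℝ → ℝ)
    (hU : ∀ t ∈ Set.Ici T₀, DifferentiableAt ℝ U t)
    (hU0 : 0 ≤ U T₀)
    (hΓub : ∀ t ≥ T₀, Γ t ≤ 2 * t ^ m + μ / t)
    (hΓlb : ∀ t ≥ T₀, (3/2) * t ^ m ≤ Γ t)
    (hineq : ∀ t ≥ T₀, c * t ^ m ≤ deriv U t + Γ t * U t) :
    ∃ c' > (0:ℝ), ∀ t ≥ 2 * T₀, c' ≤ U t := by
  refine ⟨c / (4 + μ), by positivity, fun t ht => ?_⟩
  have hslope : ∀ x ∈ Ioo T₀ t, U x < c / (4 + μ) → c / 2 ≤ deriv U x := fun x hx hUx => by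
    have hx : T₀ ≤ x := hx.1.le
    have hx2 : 2 ≤ x := hT₀.trans hx
    have hΓ0 : 0 ≤ Γ x :=
      (mul_nonneg (by norm_num) (Real.rpow_nonneg (by linarith) m)).trans (hΓlb x hx)
    exact div_two_le_of_lt_div_four_add hx2 hm hμ hc.le hΓ0 (hΓub x hx) (hineq x hx) hUx
  have hbarrier := min_le_of_le_deriv_of_lt (by linarith) (by positivity)
    (fun x hx => (hU x hx.1).continuousAt.continuousWithinAt)
    (fun x hx => (hU x hx.1.le).differentiableWithinAt) hslope
  have hclimb : c / (4 + μ) ≤ U T₀ + c / 2 * (t - T₀) := by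
    have : c / (4 + μ) ≤ c := div_le_self hc.le (by linarith)
    nlinarith
  exact (le_min le_rfl hclimb).trans hbarrier

theorem stmt14 (m μ T₀ c : ℝ) (hm : 0 ≤ m) (hμ : 0 ≤ μ) (hT₀ : 2 ≤ T₀) (hc : 0 < c)
    (U Γ : ℝ → ℝ)
    (hU : ∀ t ∈ Set.Ici T₀, DifferentiableAt ℝ U t)
    (hU0 : 0 ≤ U T₀)
    (hΓc : ContinuousOn Γ (Set.Ici T₀))
    (hΓub : ∀ t ≥ T₀, Γ t ≤ 2 * t ^ m + μ / t)
    (hΓlb : ∀ t ≥ T₀, (3/2) * t ^ m ≤ Γ t)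
    (hineq : ∀ t ≥ T₀, c * t ^ m ≤ deriv U t + Γ t * U t) :
    ∃ c' > (0:ℝ), ∀ t ≥ 2 * T₀, c' ≤ U t :=
  stmt14_general m μ T₀ c hm hμ hT₀ hc U Γ hU hU0 hΓub hΓlb hineq
end
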